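/- With the combinatorial data and notation of the context, assume additionally that β_i = 0 for every i ∈ {1,…,q}. Set ρ := r_{N̄−1} if z_{N̄} = 1, and ρ := 0 if z_{N̄} > 1. Then (the paper's Lemma 'betterthancreep', part 2): L ≤ ∑_{j=0}^{N̄} Z_j · r_j − (1/2)·ρ. -/

import Mathlib

/-!
Fix a weight `i` with `c_{N̄,i} > 0` and put `w_ℓ = c_{j(i,ℓ),i}`, `ρ_ℓ = r_{j(i,ℓ)}`. Its
contribution to `L` weights every jump `w_{ℓ+1} - w_ℓ ≥ 1` by the mean of `ρ` at the two ends of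
the jump (reading `ρ_{K_i}` as `0`). As `ρ` decreases, this is at most the left-endpoint sum
`∑_ℓ (w_{ℓ+1} - w_ℓ) ρ_ℓ = ∑_j (c_{j+1,i} - c_{j,i}) r_j`, minus half of `ρ_{K_i-1} ≥ r_{N̄-1}`.
Summing over `i` and summing by parts, `∑_j (C_{j+1} - C_j) r_j = ∑_j C_{j+1} (r_j - r_{j+1})`
for `C_j = ∑_i c_{j,i}`; the Riemann–Roch and Clifford bounds `C_j ≤ B_j`, where `B` has
increments `Z_j`, then give `L ≤ ∑_j Z_j r_j - r_{N̄-1}/2`. If every `c_{N̄,i}` vanishes, `L = 0`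
and `B_j ≥ 1` gives `∑_j Z_j r_j ≥ r_0` instead.
-/

open Finset

theorem sum_range_sub_mul_eq (f g : ℕ → ℝ) (n : ℕ) :
    ∑ j ∈ range n, (f (j + 1) - f j) * g j
      = f n * g n - f 0 * g 0 + ∑ j ∈ range n, f (j + 1) * (g j - g (j + 1)) := by
  induction n with
  | zero => simp
  | succ n ih => rw [sum_range_succ, sum_range_succ, ih]; ring

theorem sum_range_sub_mul_le_of_le {C B r : ℕ → ℝ} {n : ℕ} (h0 : C 0 = B 0)
    (hCB : ∀ j < n, C (j + 1) ≤ B (j + 1)) (hr : ∀ j < n, r (j + 1) ≤ r j) (hrn : r n = 0) :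
    ∑ j ∈ range n, (C (j + 1) - C j) * r j ≤ ∑ j ∈ range n, (B (j + 1) - B j) * r j := by
  rw [sum_range_sub_mul_eq, sum_range_sub_mul_eq, hrn, h0]
  refine add_le_add (le_of_eq (by ring)) (sum_le_sum fun j hj => ?_)
  exact mul_le_mul_of_nonneg_right (hCB j (mem_range.1 hj)) (sub_nonneg.2 (hr j (mem_range.1 hj)))

theorem le_sum_range_sub_mul {B r : ℕ → ℝ} {n : ℕ} (hB0 : B 0 = 0)
    (hB : ∀ j < n, 1 ≤ B (j + 1)) (hr : ∀ j < n, r (j + 1) ≤ r j) (hrn : r n = 0) :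
    r 0 ≤ ∑ j ∈ range n, (B (j + 1) - B j) * r j := by
  rw [sum_range_sub_mul_eq, hrn, hB0, mul_zero, zero_mul, sub_zero, zero_add]
  calc r 0 = ∑ j ∈ range n, (r j - r (j + 1)) := by rw [sum_range_sub', hrn, sub_zero]
    _ ≤ ∑ j ∈ range n, B (j + 1) * (r j - r (j + 1)) := by
      gcongr with j hj
      exact le_mul_of_one_le_left (sub_nonneg.2 (hr j (mem_range.1 hj))) (hB j (mem_range.1 hj))

theorem sum_sum_range_sub_mul_le {ι : Type*} (s : Finset ι) (c : ℕ → ι → ℝ) {B r : ℕ → ℝ}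
    {n : ℕ} (h0 : ∑ i ∈ s, c 0 i = B 0) (hcB : ∀ j < n, ∑ i ∈ s, c (j + 1) i ≤ B (j + 1))
    (hr : ∀ j < n, r (j + 1) ≤ r j) (hrn : r n = 0) :
    ∑ i ∈ s, ∑ j ∈ range n, (c (j + 1) i - c j i) * r j
      ≤ ∑ j ∈ range n, (B (j + 1) - B j) * r j := by
  rw [sum_comm]
  simp only [← sum_mul, sum_sub_distrib]
  exact sum_range_sub_mul_le_of_le (C := fun j => ∑ i ∈ s, c j i) h0 hcB hr hrn

theorem sum_le_sum_univ_sub_of_nonempty {ι : Type*} [Fintype ι] {s : Finset ι} (hs : s.Nonempty)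
    {L D : ι → ℝ} {a : ℝ} (ha : 0 ≤ a) (hD : ∀ i, 0 ≤ D i) (hL : ∀ i ∈ s, L i ≤ D i - a) :
    ∑ i ∈ s, L i ≤ ∑ i, D i - a :=
  calc ∑ i ∈ s, L i ≤ ∑ i ∈ s, (D i - a) := sum_le_sum hL
    _ = ∑ i ∈ s, D i - #s * a := by rw [sum_sub_distrib, sum_const, nsmul_eq_mul]
    _ ≤ ∑ i, D i - a := sub_le_sub (sum_le_sum_of_subset_of_nonneg (subset_univ s)
        fun i _ _ => hD i) (le_mul_of_one_le_left ha (by exact_mod_cast hs.card_pos))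

/-- With `w 0 = 0` this is `∑ ℓ < K, (w (ℓ + 1) - w ℓ) * (ρ ℓ + ρ (ℓ + 1)) / 2`, with `ρ K` read
as `0`. -/
noncomputable def averagedJumpSum (w ρ : ℕ → ℝ) (K : ℕ) : ℝ :=
  1 / 2 * w 1 * ρ 0 + ∑ ℓ ∈ Ico 1 K, 1 / 2 * (w (ℓ + 1) - w (ℓ - 1)) * ρ ℓ

theorem sum_range_sub_mul_sub_averagedJumpSum {w : ℕ → ℝ} (hw0 : w 0 = 0) (ρ : ℕ → ℝ) (K : ℕ) :
    ∑ ℓ ∈ range (K + 1), (w (ℓ + 1) - w ℓ) * ρ ℓ - averagedJumpSum w ρ (K + 1)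
      = 1 / 2 * (w (K + 1) - w K) * ρ K
        + 1 / 2 * ∑ ℓ ∈ range K, (w (ℓ + 1) - w ℓ) * (ρ ℓ - ρ (ℓ + 1)) := by
  induction K with
  | zero => simp [averagedJumpSum, hw0]; ring
  | succ K ih =>
    rw [averagedJumpSum] at ih ⊢
    rw [sum_range_succ, sum_Ico_succ_top (by omega : 1 ≤ K + 1),
      sum_range_succ (fun ℓ => (w (ℓ + 1) - w ℓ) * (ρ ℓ - ρ (ℓ + 1))), Nat.add_sub_cancel]
    linarith

theorem averagedJumpSum_le {w ρ : ℕ → ℝ} {K : ℕ} (hw0 : w 0 = 0)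
    (hw : ∀ ℓ < K, w ℓ ≤ w (ℓ + 1)) (hwK : w K + 1 ≤ w (K + 1))
    (hρ : ∀ ℓ < K, ρ (ℓ + 1) ≤ ρ ℓ) (hρK : 0 ≤ ρ K) :
    averagedJumpSum w ρ (K + 1)
      ≤ ∑ ℓ ∈ range (K + 1), (w (ℓ + 1) - w ℓ) * ρ ℓ - 1 / 2 * ρ K := by
  have hid := sum_range_sub_mul_sub_averagedJumpSum hw0 ρ K
  have hlast : 1 / 2 * ρ K ≤ 1 / 2 * (w (K + 1) - w K) * ρ K := by nlinarith
  have hrest : 0 ≤ ∑ ℓ ∈ range K, (w (ℓ + 1) - w ℓ) * (ρ ℓ - ρ (ℓ + 1)) :=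
    sum_nonneg fun ℓ hℓ => mul_nonneg (sub_nonneg.2 (hw ℓ (mem_range.1 hℓ)))
      (sub_nonneg.2 (hρ ℓ (mem_range.1 hℓ)))
  linarith

/-- The paper's `j(i, 0) < ⋯ < j(i, K_i - 1)` for the weight `f = c (·) i`, with
`j(i, K_i) = N̄`. -/
structure IsJumpEnumeration (n : ℕ) (f : ℕ → ℕ) (K : ℕ) (jf : ℕ → ℕ) : Prop where
  one_le : 1 ≤ K
  apply_last : jf K = n
  lt_of_lt : ∀ ℓ ℓ', ℓ < ℓ' → ℓ' < K → jf ℓ < jf ℓ'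
  jump : ∀ ℓ < K, jf ℓ < n ∧ f (jf ℓ) < f (jf ℓ + 1)
  exists_of_jump : ∀ j < n, f j < f (j + 1) → ∃ ℓ < K, jf ℓ = j

namespace IsJumpEnumeration

variable {n K : ℕ} {f jf : ℕ → ℕ}

theorem strictMonoOn (h : IsJumpEnumeration n f K jf) : StrictMonoOn jf (Set.Iic K) := by
  intro ℓ _ ℓ' hℓ' hlt
  rcases (Set.mem_Iic.1 hℓ').lt_or_eq with hK | rfl
  · exact h.lt_of_lt ℓ ℓ' hlt hK
  · rw [h.apply_last]
    exact (h.jump ℓ hlt).1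

theorem apply_le_apply (h : IsJumpEnumeration n f K jf) {ℓ ℓ' : ℕ} (hℓ : ℓ ≤ ℓ') (hℓ' : ℓ' ≤ K) :
    jf ℓ ≤ jf ℓ' :=
  h.strictMonoOn.monotoneOn (Set.mem_Iic.2 (hℓ.trans hℓ')) (Set.mem_Iic.2 hℓ') hℓ

theorem apply_le (h : IsJumpEnumeration n f K jf) {ℓ : ℕ} (hℓ : ℓ ≤ K) : jf ℓ ≤ n :=
  h.apply_last ▸ h.apply_le_apply hℓ le_rfl

theorem apply_eq_of_forall_not_mem (h : IsJumpEnumeration n f K jf)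
    (hf : ∀ j < n, f j ≤ f (j + 1)) {a b : ℕ} (hab : a ≤ b) (hbn : b ≤ n)
    (hno : ∀ ℓ < K, jf ℓ ∉ Set.Ico a b) : f b = f a := by
  induction b, hab using Nat.le_induction with
  | base => rfl
  | succ b hab ih =>
    have hstep : f (b + 1) = f b := by
      refine le_antisymm (not_lt.1 fun hlt => ?_) (hf b (by omega))
      obtain ⟨ℓ, hℓ, hjf⟩ := h.exists_of_jump b (by omega) hlt
      exact hno ℓ hℓ ⟨hjf ▸ hab, by omega⟩
    rw [hstep, ih (by omega) fun ℓ hℓ hmem => hno ℓ hℓ ⟨hmem.1, by have := hmem.2; omega⟩]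

theorem apply_zero (h : IsJumpEnumeration n f K jf) (hf : ∀ j < n, f j ≤ f (j + 1)) :
    f (jf 0) = f 0 :=
  h.apply_eq_of_forall_not_mem hf (Nat.zero_le _) (h.apply_le (Nat.zero_le _))
    fun ℓ hℓ hmem => (h.apply_le_apply (Nat.zero_le ℓ) hℓ.le).not_gt hmem.2

theorem apply_succ (h : IsJumpEnumeration n f K jf) (hf : ∀ j < n, f j ≤ f (j + 1)) {ℓ : ℕ}
    (hℓ : ℓ < K) : f (jf (ℓ + 1)) = f (jf ℓ + 1) := by
  refine h.apply_eq_of_forall_not_mem hf (h.strictMonoOn (Set.mem_Iic.2 hℓ.le)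
    (Set.mem_Iic.2 hℓ) (Nat.lt_succ_self ℓ)) (h.apply_le hℓ) fun ℓ' hℓ' hmem => ?_
  rcases le_or_gt ℓ' ℓ with hle | hgt
  · exact (h.apply_le_apply hle hℓ.le).not_gt hmem.1
  · exact (h.apply_le_apply hgt hℓ'.le).not_gt hmem.2

theorem sum_range_sub_mul (h : IsJumpEnumeration n f K jf) (hf : ∀ j < n, f j ≤ f (j + 1))
    (r : ℕ → ℝ) :
    ∑ j ∈ range n, ((f (j + 1) : ℝ) - f j) * r j
      = ∑ ℓ ∈ range K, ((f (jf (ℓ + 1)) : ℝ) - f (jf ℓ)) * r (jf ℓ) := by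
  have hinj : Set.InjOn jf (range K) :=
    h.strictMonoOn.injOn.mono fun ℓ hℓ => Set.mem_Iic.2 (mem_range.1 hℓ).le
  have hsub : (range K).image jf ⊆ range n := by
    intro j hj
    obtain ⟨ℓ, hℓ, rfl⟩ := mem_image.1 hj
    exact mem_range.2 (h.jump ℓ (mem_range.1 hℓ)).1
  rw [← sum_subset hsub, sum_image hinj]
  · refine sum_congr rfl fun ℓ hℓ => ?_
    rw [h.apply_succ hf (mem_range.1 hℓ)]
  · intro j hj hnot
    rw [h.apply_eq_of_forall_not_mem hf (Nat.le_succ j) (mem_range.1 hj) fun ℓ hℓ hmem => hnot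
      (mem_image.2 ⟨ℓ, mem_range.2 hℓ, by have := hmem.2; have := hmem.1; omega⟩), sub_self,
      zero_mul]

theorem averagedJumpSum_le_sum_range_sub_mul (h : IsJumpEnumeration n f K jf)
    (hf : ∀ j < n, f j ≤ f (j + 1)) (hf0 : f 0 = 0) {r : ℕ → ℝ} (hr : AntitoneOn r (Set.Iic n))
    (hrn : 0 ≤ r n) :
    averagedJumpSum (fun ℓ => f (jf ℓ)) (fun ℓ => r (jf ℓ)) K
      ≤ ∑ j ∈ range n, ((f (j + 1) : ℝ) - f j) * r j - 1 / 2 * r (n - 1) := by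
  obtain ⟨K, rfl⟩ : ∃ K', K = K' + 1 := ⟨K - 1, by have := h.one_le; omega⟩
  have hjump : ∀ ℓ < K + 1, (f (jf ℓ) : ℝ) + 1 ≤ f (jf (ℓ + 1)) := fun ℓ hℓ => by
    rw [h.apply_succ hf hℓ]
    exact_mod_cast (h.jump ℓ hℓ).2
  have hr' : ∀ {ℓ ℓ'}, ℓ ≤ ℓ' → ℓ' ≤ K + 1 → r (jf ℓ') ≤ r (jf ℓ) := fun hℓ hℓ' =>
    hr (Set.mem_Iic.2 (h.apply_le (hℓ.trans hℓ'))) (Set.mem_Iic.2 (h.apply_le hℓ'))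
      (h.apply_le_apply hℓ hℓ')
  have hlast : r (n - 1) ≤ r (jf K) := by
    have := (h.jump K (Nat.lt_succ_self K)).1
    exact hr (Set.mem_Iic.2 (h.apply_le (Nat.le_succ K))) (Set.mem_Iic.2 (Nat.sub_le n 1))
      (by omega)
  calc averagedJumpSum (fun ℓ => f (jf ℓ)) (fun ℓ => r (jf ℓ)) (K + 1)
      ≤ ∑ ℓ ∈ range (K + 1), ((f (jf (ℓ + 1)) : ℝ) - f (jf ℓ)) * r (jf ℓ) - 1 / 2 * r (jf K) :=
        averagedJumpSum_le (by simp [h.apply_zero hf, hf0])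
          (fun ℓ hℓ => by linarith [hjump ℓ (by omega)]) (hjump K (Nat.lt_succ_self K))
          (fun ℓ hℓ => hr' (Nat.le_succ ℓ) (by omega))
          (hrn.trans (h.apply_last ▸ hr' (Nat.le_succ K) le_rfl))
    _ ≤ _ := by
      rw [h.sum_range_sub_mul hf r]
      linarith

end IsJumpEnumeration

noncomputable def rrCliffordBound (z : ℕ → ℕ) (d : ℝ) (jRR j : ℕ) : ℝ :=
  if j ≤ jRR then ∑ τ ∈ range j, (z τ : ℝ) else 2 * ∑ τ ∈ range j, (z τ : ℝ) - d

/-- The paper's `Z_j`, with `d = N - g`. -/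
noncomputable def rrCliffordWeight (z : ℕ → ℕ) (d : ℝ) (jRR j : ℕ) : ℝ :=
  if j < jRR then (z j : ℝ)
  else if j = jRR then (z j : ℝ) + ((∑ τ ∈ range (jRR + 1), (z τ : ℝ)) - d)
  else 2 * (z j : ℝ)

section RiemannRochClifford

variable {z : ℕ → ℕ} {d : ℝ} {jRR : ℕ}

theorem rrCliffordBound_zero : rrCliffordBound z d jRR 0 = 0 := by
  simp [rrCliffordBound]

theorem rrCliffordBound_succ_sub (j : ℕ) :
    rrCliffordBound z d jRR (j + 1) - rrCliffordBound z d jRR j = rrCliffordWeight z d jRR j := by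
  unfold rrCliffordBound rrCliffordWeight
  rcases lt_trichotomy j jRR with h | rfl | h
  · simp [h, h.le, Nat.succ_le_of_lt h, sum_range_succ]
  · simp [sum_range_succ]
    ring
  · simp [h.ne', h.not_gt, Nat.lt_succ_of_lt h |>.not_ge, h.not_ge, sum_range_succ]
    ring

variable {n N g : ℕ}

theorem sub_lt_sum_range_of_lt (hjRR_max : ∀ j ≤ n, ∑ τ ∈ range j, z τ ≤ N - g → j ≤ jRR) {j : ℕ}
    (hjn : j ≤ n) (hj : jRR < j) : N - g < ∑ τ ∈ range j, z τ := by
  by_contra! hle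
  exact hj.not_ge (hjRR_max j hjn hle)

theorem le_rrCliffordBound {C : ℕ → ℕ}
    (hRR : ∀ j, 1 ≤ j → j ≤ n → ∑ τ ∈ range j, z τ ≤ N - g → C j ≤ ∑ τ ∈ range j, z τ)
    (hCliff : ∀ j, 1 ≤ j → j ≤ n → N - g < ∑ τ ∈ range j, z τ →
      (C j : ℤ) ≤ 2 * (∑ τ ∈ range j, (z τ : ℤ)) - ((N : ℤ) - (g : ℤ)))
    (hjRR : ∑ τ ∈ range jRR, z τ ≤ N - g)
    (hjRR_max : ∀ j ≤ n, ∑ τ ∈ range j, z τ ≤ N - g → j ≤ jRR)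
    {j : ℕ} (hj1 : 1 ≤ j) (hjn : j ≤ n) : (C j : ℝ) ≤ rrCliffordBound z ((N : ℝ) - g) jRR j := by
  unfold rrCliffordBound
  split_ifs with hle
  · exact_mod_cast hRR j hj1 hjn ((sum_le_sum_of_subset (range_subset_range.2 hle)).trans hjRR)
  · exact_mod_cast hCliff j hj1 hjn (sub_lt_sum_range_of_lt hjRR_max hjn (not_le.1 hle))

theorem one_le_rrCliffordBound (hz0 : 1 ≤ z 0)
    (hjRR_max : ∀ j ≤ n, ∑ τ ∈ range j, z τ ≤ N - g → j ≤ jRR)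
    {j : ℕ} (hj1 : 1 ≤ j) (hjn : j ≤ n) : 1 ≤ rrCliffordBound z ((N : ℝ) - g) jRR j := by
  have hz : (1 : ℝ) ≤ ∑ τ ∈ range j, (z τ : ℝ) := by
    exact_mod_cast hz0.trans (single_le_sum (fun τ _ => Nat.zero_le (z τ)) (mem_range.2 hj1))
  unfold rrCliffordBound
  split_ifs with hle
  · exact hz
  · have hgt : (N : ℤ) - g < ((∑ τ ∈ range j, z τ : ℕ) : ℤ) := by
      have := sub_lt_sum_range_of_lt hjRR_max hjn (not_le.1 hle)
      omega
    have : (N : ℝ) - g < ((∑ τ ∈ range j, z τ : ℕ) : ℝ) := by exact_mod_cast hgt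
    push_cast at this
    linarith

theorem sum_range_rrCliffordBound_sub_mul {r : ℕ → ℝ} {n : ℕ} (hrn : r n = 0) :
    ∑ j ∈ range n, (rrCliffordBound z d jRR (j + 1) - rrCliffordBound z d jRR j) * r j
      = ∑ j ∈ range (n + 1), rrCliffordWeight z d jRR j * r j := by
  simp only [sum_range_succ _ n, hrn, mul_zero, add_zero, rrCliffordBound_succ_sub]

end RiemannRochClifford

theorem stmt10_general (Nbar q g N : ℕ)
    (z : ℕ → ℕ) (hz : ∀ j ≤ Nbar, 1 ≤ z j)
    (r : ℕ → ℝ) (hrdec : ∀ j < Nbar, r (j + 1) < r j) (hrN : r Nbar = 0)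
    (c : ℕ → Fin q → ℕ)
    (hc0 : ∀ i : Fin q, c 0 i = 0)
    (hcmono : ∀ j < Nbar, ∀ i : Fin q, c j i ≤ c (j + 1) i)
    (β : Fin q → ℝ)
    (hRR : ∀ j, 1 ≤ j → j ≤ Nbar →
      ∑ τ ∈ Finset.range j, z τ ≤ N - g →
      ∑ i : Fin q, c j i ≤ ∑ τ ∈ Finset.range j, z τ)
    (hCliff : ∀ j, 1 ≤ j → j ≤ Nbar →
      N - g < ∑ τ ∈ Finset.range j, z τ →
      ((∑ i : Fin q, c j i : ℕ) : ℤ) ≤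
        2 * (∑ τ ∈ Finset.range j, (z τ : ℤ)) - ((N : ℤ) - (g : ℤ)))
    (jRR : ℕ)
    (hjRR2 : ∑ τ ∈ Finset.range jRR, z τ ≤ N - g)
    (hjRR3 : ∀ j ≤ Nbar, ∑ τ ∈ Finset.range j, z τ ≤ N - g → j ≤ jRR)
    (K : Fin q → ℕ) (jf : Fin q → ℕ → ℕ)
    (henum : ∀ i : Fin q, 0 < c Nbar i →
      1 ≤ K i ∧
      jf i (K i) = Nbar ∧
      (∀ ℓ ℓ', ℓ < ℓ' → ℓ' < K i → jf i ℓ < jf i ℓ') ∧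
      (∀ ℓ < K i, jf i ℓ < Nbar ∧ c (jf i ℓ) i < c (jf i ℓ + 1) i) ∧
      (∀ j < Nbar, c j i < c (j + 1) i → ∃ ℓ < K i, jf i ℓ = j))
    (hβzero : ∀ i : Fin q, β i = 0) :
    (∑ i ∈ Finset.univ.filter (fun i : Fin q => 0 < c Nbar i),
      ((1 / 2 * (c (jf i 1) i : ℝ) + β i) * r (jf i 0) +
        ∑ ℓ ∈ Finset.Ico 1 (K i),
          1 / 2 * ((c (jf i (ℓ + 1)) i : ℝ) - (c (jf i (ℓ - 1)) i : ℝ)) * r (jf i ℓ)))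
    ≤ (∑ j ∈ Finset.range (Nbar + 1),
        (if j < jRR then (z j : ℝ)
         else if j = jRR then
           (z j : ℝ) + ((∑ τ ∈ Finset.range (jRR + 1), (z τ : ℝ)) - ((N : ℝ) - (g : ℝ)))
         else 2 * (z j : ℝ)) * r j)
      - (1 / 2) * (if z Nbar = 1 then r (Nbar - 1) else 0) := by
  set S := univ.filter fun i : Fin q => 0 < c Nbar i
  set B := rrCliffordBound z ((N : ℝ) - g) jRR
  set D : Fin q → ℝ := fun i => ∑ j ∈ range Nbar, ((c (j + 1) i : ℝ) - c j i) * r j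
  have hr : ∀ j < Nbar, r (j + 1) ≤ r j := fun j hj => (hrdec j hj).le
  have hanti : AntitoneOn r (Set.Iic Nbar) :=
    antitoneOn_of_add_one_le Set.ordConnected_Iic fun j _ _ hj => hr j hj
  have hr_nonneg {j : ℕ} (hj : j ≤ Nbar) : 0 ≤ r j :=
    hrN ▸ hanti (Set.mem_Iic.2 hj) (Set.mem_Iic.2 le_rfl) hj
  have hr_last := hr_nonneg (Nat.sub_le Nbar 1)
  have hρ : 1 / 2 * (if z Nbar = 1 then r (Nbar - 1) else 0) ≤ 1 / 2 * r (Nbar - 1) := by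
    split_ifs <;> linarith
  have hper : ∀ i ∈ S, averagedJumpSum (fun ℓ => c (jf i ℓ) i) (fun ℓ => r (jf i ℓ)) (K i)
      ≤ D i - 1 / 2 * r (Nbar - 1) := fun i hi => by
    obtain ⟨h1, h2, h3, h4, h5⟩ := henum i (mem_filter.1 hi).2
    exact IsJumpEnumeration.averagedJumpSum_le_sum_range_sub_mul (f := fun j => c j i)
      ⟨h1, h2, h3, h4, h5⟩ (fun j hj => hcmono j hj i) (hc0 i) hanti hrN.ge
  have hD : ∀ i, 0 ≤ D i := fun i => sum_nonneg fun j hj => mul_nonneg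
    (sub_nonneg.2 (by exact_mod_cast hcmono j (mem_range.1 hj) i)) (hr_nonneg (mem_range.1 hj).le)
  have hCB : ∀ j < Nbar, ∑ i, (c (j + 1) i : ℝ) ≤ B (j + 1) := fun j hj => by
    have := le_rrCliffordBound (C := fun j => ∑ i, c j i) hRR hCliff hjRR2 hjRR3
      (Nat.succ_pos j) hj
    simpa only [Nat.cast_sum] using this
  have hDB : ∑ i, D i ≤ ∑ j ∈ range Nbar, (B (j + 1) - B j) * r j :=
    sum_sum_range_sub_mul_le univ (fun j i => (c j i : ℝ))
      (by simp [hc0, B, rrCliffordBound_zero]) hCB hr hrN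
  simp only [hβzero, add_zero]
  refine le_trans ?_ (sub_le_sub (sum_range_rrCliffordBound_sub_mul hrN).le hρ)
  rcases S.eq_empty_or_nonempty with hS | hS
  · have := le_sum_range_sub_mul rrCliffordBound_zero
      (fun j hj => one_le_rrCliffordBound (hz 0 (Nat.zero_le _)) hjRR3 (Nat.succ_pos j) hj) hr hrN
    have := hanti (Set.mem_Iic.2 (Nat.zero_le _)) (Set.mem_Iic.2 (Nat.sub_le Nbar 1))
      (Nat.zero_le _)
    rw [hS, sum_empty]
    linarith
  · exact (sum_le_sum_univ_sub_of_nonempty hS (by linarith) hD hper).trans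
      (sub_le_sub_right hDB _)

/-- The paper's Lemma `betterthancreep`, part 2: with no marked points
(`β_i = 0`), the bound of Lemma `creep` improves by `(1/2) ρ`. -/
theorem stmt10 (Nbar q g N : ℕ) (hNbar : 1 ≤ Nbar) (hq : 1 ≤ q) (hgN : g ≤ N)
    (z : ℕ → ℕ) (hz : ∀ j ≤ Nbar, 1 ≤ z j)
    (r : ℕ → ℝ) (hrdec : ∀ j < Nbar, r (j + 1) < r j) (hrN : r Nbar = 0)
    (c : ℕ → Fin q → ℕ)
    (hc0 : ∀ i : Fin q, c 0 i = 0)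
    (hcmono : ∀ j < Nbar, ∀ i : Fin q, c j i ≤ c (j + 1) i)
    (β : Fin q → ℝ) (hβ0 : ∀ i : Fin q, 0 ≤ β i) (hβh : ∀ i : Fin q, β i ≤ 1 / 2)
    (hRR : ∀ j, 1 ≤ j → j ≤ Nbar →
      ∑ τ ∈ Finset.range j, z τ ≤ N - g →
      ∑ i : Fin q, c j i ≤ ∑ τ ∈ Finset.range j, z τ)
    (hCliff : ∀ j, 1 ≤ j → j ≤ Nbar →
      N - g < ∑ τ ∈ Finset.range j, z τ →
      ((∑ i : Fin q, c j i : ℕ) : ℤ) ≤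
        2 * (∑ τ ∈ Finset.range j, (z τ : ℤ)) - ((N : ℤ) - (g : ℤ)))
    (jRR : ℕ) (hjRR1 : jRR ≤ Nbar)
    (hjRR2 : ∑ τ ∈ Finset.range jRR, z τ ≤ N - g)
    (hjRR3 : ∀ j ≤ Nbar, ∑ τ ∈ Finset.range j, z τ ≤ N - g → j ≤ jRR)
    (K : Fin q → ℕ) (jf : Fin q → ℕ → ℕ)
    (henum : ∀ i : Fin q, 0 < c Nbar i →
      1 ≤ K i ∧
      jf i (K i) = Nbar ∧
      (∀ ℓ ℓ', ℓ < ℓ' → ℓ' < K i → jf i ℓ < jf i ℓ') ∧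
      (∀ ℓ < K i, jf i ℓ < Nbar ∧ c (jf i ℓ) i < c (jf i ℓ + 1) i) ∧
      (∀ j < Nbar, c j i < c (j + 1) i → ∃ ℓ < K i, jf i ℓ = j))
    (hβzero : ∀ i : Fin q, β i = 0) :
    (∑ i ∈ Finset.univ.filter (fun i : Fin q => 0 < c Nbar i),
      ((1 / 2 * (c (jf i 1) i : ℝ) + β i) * r (jf i 0) +
        ∑ ℓ ∈ Finset.Ico 1 (K i),
          1 / 2 * ((c (jf i (ℓ + 1)) i : ℝ) - (c (jf i (ℓ - 1)) i : ℝ)) * r (jf i ℓ)))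
    ≤ (∑ j ∈ Finset.range (Nbar + 1),
        (if j < jRR then (z j : ℝ)
         else if j = jRR then
           (z j : ℝ) + ((∑ τ ∈ Finset.range (jRR + 1), (z τ : ℝ)) - ((N : ℝ) - (g : ℝ)))
         else 2 * (z j : ℝ)) * r j)
      - (1 / 2) * (if z Nbar = 1 then r (Nbar - 1) else 0) :=
  stmt10_general Nbar q g N z hz r hrdec hrN c hc0 hcmono β hRR hCliff jRR hjRR2 hjRR3 K jf henum
    hβzero
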